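/- arXiv:math/0403192 — 4 statements merged into one kernel-verified Lean document; each statement's English description precedes it below -/
import Mathlib

section
/- With X = c₁c₂ - 2, the sequence a_l satisfies the recursion a_{2k+1} = c₂·a_{2k} - a_{2k-1} for all k ≥ 1. -/
/-- Chebyshev-type sequence: `cheb X n` is `P_{n-1}(X)`, with `P_{-1}=0`, `P_0=1`,
`P_k = X·P_{k-1} - P_{k-2}`. -/
def cheb (X : ℤ) : ℕ → ℤ
  | 0 => 0
  | 1 => 1
  | (n+2) => X * cheb X (n+1) - cheb X n

/-- `seqA c X l` is `a_l`: `a_{2k} = c·P_{k-1}(X)`, `a_{2k+1} = P_k(X)+P_{k-1}(X)`. -/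
def seqA (c X : ℤ) (l : ℕ) : ℤ :=
  if l % 2 = 0 then c * cheb X (l / 2) else cheb X (l / 2 + 1) + cheb X (l / 2)

/-- `a_{2k+1} = c₂·a_{2k} - a_{2k-1}` for all k ≥ 1, where `X = c₁c₂ - 2`. -/
theorem a_odd_recursion (c₁ c₂ : ℤ) (k : ℕ) (hk : 1 ≤ k) :
    seqA c₁ (c₁ * c₂ - 2) (2 * k + 1) =
      c₂ * seqA c₁ (c₁ * c₂ - 2) (2 * k) - seqA c₁ (c₁ * c₂ - 2) (2 * k - 1) := by
  obtain ⟨m, rfl⟩ := Nat.exists_eq_add_of_le hk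
  have h1 : 2 * (1 + m) + 1 = 2 * m + 1 + 2 := by ring
  have h2 : 2 * (1 + m) - 1 = 2 * m + 1 := by omega
  simp only [seqA, h1, h2, Nat.add_mul_mod_self_left, Nat.mul_mod_right]
  have hm : (2 * m + 1) % 2 ≠ 0 := by omega
  have e3 : (2 * m + 1) / 2 = m := by omega
  have hm1 : (2 * m + 1 + 2) % 2 ≠ 0 := by omega
  have f1 : (2 * m + 1 + 2) / 2 = m + 1 := by omega
  have f2 : 2 * (1 + m) / 2 = m + 1 := by omega
  rw [if_neg hm1, if_pos trivial, e3, f1, f2]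
  have : cheb (c₁ * c₂ - 2) (m + 1 + 1) = (c₁ * c₂ - 2) * cheb (c₁ * c₂ - 2) (m+1) - cheb (c₁ * c₂ - 2) m := rfl
  rw [this]
  rw [if_neg hm]
  ring
end

section
/- For all k ≥ 0, a_{2k+2}·a'_{2k+2} - a_{2k+3}·a'_{2k+1} = 1. -/
lemma cheb_det (X : ℤ) (k : ℕ) :
    cheb X (k+1) ^ 2 - cheb X (k+2) * cheb X k = 1 := by
  induction k with
  | zero => simp [cheb]
  | succ n ih =>
    have h : cheb X (n+3) = X * cheb X (n+2) - cheb X (n+1) := rfl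
    rw [h]
    have h2 : cheb X (n+2) = X * cheb X (n+1) - cheb X n := rfl
    linear_combination ih + cheb X (n+2) * h2

/-- `a_{2k+2}·a'_{2k+2} - a_{2k+3}·a'_{2k+1} = 1` for all k ≥ 0. -/
theorem det_identity_even (c₁ c₂ : ℤ) (h4 : 4 ≤ c₁ * c₂) (k : ℕ) :
    seqA c₁ (c₁ * c₂ - 2) (2 * k + 2) * seqA c₂ (c₁ * c₂ - 2) (2 * k + 2) -
      seqA c₁ (c₁ * c₂ - 2) (2 * k + 3) * seqA c₂ (c₁ * c₂ - 2) (2 * k + 1) = 1 := by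
  have e1 : (2 * k + 2) % 2 = 0 := by omega
  have e2 : (2 * k + 3) % 2 = 1 := by omega
  have e3 : (2 * k + 1) % 2 = 1 := by omega
  have d1 : (2 * k + 2) / 2 = k + 1 := by omega
  have d2 : (2 * k + 3) / 2 = k + 1 := by omega
  have d3 : (2 * k + 1) / 2 = k := by omega
  simp only [seqA, e1, e2, e3, d1, d2, d3, if_true, if_false]
  norm_num
  set X : ℤ := c₁ * c₂ - 2 with hX
  have h : cheb X (k+2) = X * cheb X (k+1) - cheb X k := rfl
  have hd := cheb_det X k
  have hc : c₁ * c₂ = X + 2 := by omega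
  linear_combination cheb X (k+1)^2 * hc - cheb X (k+1) * h + hd
end

section
/- For all k ≥ 1, a_{2k+1}·a'_{2k+1} - a_{2k+2}·a'_{2k} = 1. -/
lemma cheb_id (X : ℤ) : ∀ n, cheb X (n+1)^2 + cheb X n ^2 - X * cheb X (n+1) * cheb X n = 1 := by
  intro n
  induction n with
  | zero => simp [cheb]
  | succ m ih =>
    have h : cheb X (m+2) = X * cheb X (m+1) - cheb X m := rfl
    rw [h]; nlinarith [ih]

/-- `a_{2k+1}·a'_{2k+1} - a_{2k+2}·a'_{2k} = 1` for all k ≥ 1. -/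
theorem det_identity_odd (c₁ c₂ : ℤ) (h4 : 4 ≤ c₁ * c₂) (k : ℕ) (hk : 1 ≤ k) :
    seqA c₁ (c₁ * c₂ - 2) (2 * k + 1) * seqA c₂ (c₁ * c₂ - 2) (2 * k + 1) -
      seqA c₁ (c₁ * c₂ - 2) (2 * k + 2) * seqA c₂ (c₁ * c₂ - 2) (2 * k) = 1 := by
  have h1 : (2 * k + 1) % 2 = 1 := by omega
  have h2 : (2 * k + 1) / 2 = k := by omega
  have h3 : (2 * k + 2) % 2 = 0 := by omega
  have h4' : (2 * k + 2) / 2 = k + 1 := by omega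
  have h5 : (2 * k) % 2 = 0 := by omega
  have h6 : (2 * k) / 2 = k := by omega
  simp only [seqA, h1, h2, h3, h4', h5, h6]
  norm_num
  have := cheb_id (c₁ * c₂ - 2) k
  nlinarith [this]
end

section
/- For all l ≥ 1, a_{l+1}·a'_{l+1} - a_{l+2}·a'_l = 1. -/
lemma cheb_key (X : ℤ) (n : ℕ) :
    cheb X (n+1) ^ 2 + cheb X n ^ 2 - X * cheb X (n+1) * cheb X n = 1 := by
  induction n with
  | zero => simp [cheb]
  | succ n ih =>
    rw [show cheb X (n+2) = X * cheb X (n+1) - cheb X n from rfl]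
    linear_combination ih

lemma seqA_even (c X : ℤ) (k : ℕ) : seqA c X (2 * k) = c * cheb X k := by
  simp [seqA, Nat.mul_div_cancel_left, Nat.mul_mod_right]

lemma seqA_odd (c X : ℤ) (k : ℕ) : seqA c X (2 * k + 1) = cheb X (k+1) + cheb X k := by
  have h1 : (2 * k + 1) % 2 = 1 := by omega
  have h2 : (2 * k + 1) / 2 = k := by omega
  simp [seqA, h1, h2]

/-- `a_{l+1}·a'_{l+1} - a_{l+2}·a'_l = 1` for all l ≥ 1. -/
theorem det_identity (c₁ c₂ : ℤ) (h4 : 4 ≤ c₁ * c₂) (l : ℕ) (hl : 1 ≤ l) :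
    seqA c₁ (c₁ * c₂ - 2) (l + 1) * seqA c₂ (c₁ * c₂ - 2) (l + 1) -
      seqA c₁ (c₁ * c₂ - 2) (l + 2) * seqA c₂ (c₁ * c₂ - 2) l = 1 := by
  set X : ℤ := c₁ * c₂ - 2 with hX
  rcases Nat.even_or_odd l with ⟨k, hk⟩ | ⟨k, hk⟩
  · have h1 : l + 1 = 2 * k + 1 := by omega
    have h2 : l + 2 = 2 * (k + 1) := by omega
    have h3 : l = 2 * k := by omega
    rw [h1, h2, h3, seqA_odd, seqA_odd, seqA_even, seqA_even]
    linear_combination cheb_key X k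
  · have h1 : l + 1 = 2 * (k + 1) := by omega
    have h2 : l + 2 = 2 * (k + 1) + 1 := by omega
    have h3 : l = 2 * k + 1 := by omega
    rw [h1, h2, h3, seqA_even, seqA_even, seqA_odd, seqA_odd]
    rw [show cheb X (k+2) = X * cheb X (k+1) - cheb X k from rfl]
    linear_combination cheb_key X k
end
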